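/- arXiv:2111.09723 — 9 statements merged into one kernel-verified Lean document; each statement's English description precedes it below -/
import Mathlib

section
/- If φ : E₁ → E₂ is a bijective L-map between finite-dimensional 𝔽_q-vector spaces, then dim E₁ = dim E₂ and the inverse φ⁻¹ is also an L-map. -/
open Submodule

/-- An `L`-map: a map between `F`-vector spaces that maps every subspace onto a subspace. -/
def IsLMap (F : Type*) [Field F] {E₁ E₂ : Type*} [AddCommGroup E₁] [Module F E₁]
    [AddCommGroup E₂] [Module F E₂] (φ : E₁ → E₂) : Prop :=
  ∀ V : Submodule F E₁, ∃ W : Submodule F E₂, φ '' (V : Set E₁) = (W : Set E₂)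

theorem stmt1 {F : Type*} [Field F] [Fintype F]
    {E₁ E₂ : Type*} [AddCommGroup E₁] [Module F E₁] [FiniteDimensional F E₁]
    [AddCommGroup E₂] [Module F E₂] [FiniteDimensional F E₂]
    (φ : E₁ → E₂) (hφ : IsLMap F φ) (hbij : Function.Bijective φ) :
    Module.finrank F E₁ = Module.finrank F E₂ ∧ IsLMap F (Function.invFun φ) := by
  have hfin1 : Finite E₁ := Module.finite_of_finite F
  have hfin2 : Finite E₂ := Module.finite_of_finite F
  have : Fintype E₁ := Fintype.ofFinite E₁
  have : Fintype E₂ := Fintype.ofFinite E₂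
  -- equal dimensions via cardinality
  have hc1 : Fintype.card E₁ = Fintype.card F ^ Module.finrank F E₁ := Module.card_eq_pow_finrank
  have hc2 : Fintype.card E₂ = Fintype.card F ^ Module.finrank F E₂ := Module.card_eq_pow_finrank
  have hcard : Fintype.card E₁ = Fintype.card E₂ := Fintype.card_of_bijective hbij
  have hrank : Module.finrank F E₁ = Module.finrank F E₂ := by
    refine Nat.pow_right_injective (Fintype.one_lt_card (α := F)) ?_
    simpa using hc1 ▸ hc2 ▸ hcard
  refine ⟨hrank, ?_⟩
  -- the map on submodules
  choose f hf using hφ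
  have hfinj : Function.Injective f := by
    intro V V' h
    have : φ '' (V : Set E₁) = φ '' (V' : Set E₁) := by rw [hf, hf, h]
    exact SetLike.coe_injective (Set.image_injective.mpr hbij.1 this)
  obtain ⟨e⟩ := FiniteDimensional.nonempty_linearEquiv_of_finrank_eq hrank
  have oiso := Submodule.orderIsoMapComap e
  have hfsurj : Function.Surjective f := by
    have : Function.Injective (oiso.symm ∘ f) := oiso.symm.injective.comp hfinj
    have hb : Function.Bijective (oiso.symm ∘ f) := Finite.injective_iff_bijective.mp this
    intro W
    obtain ⟨V, hV⟩ := hb.2 (oiso.symm W)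
    exact ⟨V, oiso.symm.injective.eq_iff.mp hV⟩
  intro W
  obtain ⟨V, rfl⟩ := hfsurj W
  refine ⟨V, ?_⟩
  rw [← hf]
  rw [← Set.image_comp]
  have : Function.invFun φ ∘ φ = id := funext (Function.leftInverse_invFun hbij.1)
  rw [this, Set.image_id]
end

section
/- Let φ : E₁ → E₂ be an L-map with E₂ ≠ 0 such that the induced map on subspace lattices satisfies φ(0) = 0, φ(E₁) = E₂, and is both join-preserving and meet-preserving. Then φ is bijective (hence an L-isomorphism). -/
open Submodule

/-- If the lattice map induced by an `L`-map is a `{0,1}`-lattice homomorphism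
(with `E₂ ≠ 0`), then the `L`-map is bijective, i.e. an `L`-isomorphism. -/
theorem stmt3 {F : Type*} [Field F] [Fintype F]
    {E₁ E₂ : Type*} [AddCommGroup E₁] [Module F E₁] [FiniteDimensional F E₁]
    [AddCommGroup E₂] [Module F E₂] [FiniteDimensional F E₂] [Nontrivial E₂]
    (φ : E₁ → E₂) (hφ : IsLMap F φ)
    (hbot : φ '' ((⊥ : Submodule F E₁) : Set E₁) = ((⊥ : Submodule F E₂) : Set E₂))
    (htop : φ '' ((⊤ : Submodule F E₁) : Set E₁) = ((⊤ : Submodule F E₂) : Set E₂))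
    (hlat : ∀ (V₁ V₂ : Submodule F E₁) (W₁ W₂ : Submodule F E₂),
      φ '' (V₁ : Set E₁) = (W₁ : Set E₂) → φ '' (V₂ : Set E₁) = (W₂ : Set E₂) →
      φ '' ((V₁ ⊓ V₂ : Submodule F E₁) : Set E₁) = ((W₁ ⊓ W₂ : Submodule F E₂) : Set E₂) ∧
      φ '' ((V₁ ⊔ V₂ : Submodule F E₁) : Set E₁) = ((W₁ ⊔ W₂ : Submodule F E₂) : Set E₂)) :
    Function.Bijective φ := by
  classical
  have hfin1 : Finite E₁ := Module.finite_of_finite F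
  have hfin2 : Finite E₂ := Module.finite_of_finite F
  -- φ 0 = 0
  have hz : φ 0 = 0 := by
    have h0 : φ 0 ∈ φ '' ((⊥ : Submodule F E₁) : Set E₁) :=
      ⟨0, by simp, rfl⟩
    rw [hbot] at h0
    simpa using h0
  -- surjectivity
  have hsurj : Function.Surjective φ := by
    intro y
    have hy : y ∈ φ '' ((⊤ : Submodule F E₁) : Set E₁) := by
      rw [htop]; exact mem_top
    obtain ⟨x, -, hx⟩ := hy
    exact ⟨x, hx⟩
  -- cardinality of submodules of E₁ and E₂
  have hcard1 : ∀ U : Submodule F E₁, Nat.card U = Fintype.card F ^ Module.finrank F U := by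
    intro U
    have : Fintype E₁ := Fintype.ofFinite E₁
    have : Fintype U := Fintype.ofFinite U
    rw [Nat.card_eq_fintype_card, Module.card_eq_pow_finrank (K := F)]
  have hcard2 : ∀ U : Submodule F E₂, Nat.card U = Fintype.card F ^ Module.finrank F U := by
    intro U
    have : Fintype E₂ := Fintype.ofFinite E₂
    have : Fintype U := Fintype.ofFinite U
    rw [Nat.card_eq_fintype_card, Module.card_eq_pow_finrank (K := F)]
  have hq : 1 < Fintype.card F := Fintype.one_lt_card
  -- no line collapses to ⊥
  have hline : ∀ x : E₁, x ≠ 0 →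
      φ '' ((span F {x} : Submodule F E₁) : Set E₁) ≠ ((⊥ : Submodule F E₂) : Set E₂) := by
    intro x hx hcol
    have hall : ∀ y : E₁, φ y = 0 := by
      intro y
      by_cases hy : y ∈ span F {x}
      · have : φ y ∈ φ '' ((span F {x} : Submodule F E₁) : Set E₁) := ⟨y, hy, rfl⟩
        rw [hcol] at this
        simpa using this
      · obtain ⟨Wy, hWy⟩ := hφ (span F {y})
        obtain ⟨Wz, hWz⟩ := hφ (span F {x + y})
        -- span x ⊔ span (x+y) = span x ⊔ span y
        have hspan : (span F {x} ⊔ span F {x + y} : Submodule F E₁)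
            = span F {x} ⊔ span F {y} := by
          apply le_antisymm
          · refine sup_le le_sup_left ?_
            rw [span_le, Set.singleton_subset_iff]
            exact add_mem (mem_sup_left (mem_span_singleton_self x))
              (mem_sup_right (mem_span_singleton_self y))
          · refine sup_le le_sup_left ?_
            rw [span_le, Set.singleton_subset_iff]
            have hmem : x + y - x ∈ (span F {x} ⊔ span F {x + y} : Submodule F E₁) :=
              sub_mem (mem_sup_right (mem_span_singleton_self (x + y)))
                (mem_sup_left (mem_span_singleton_self x))
            simp [add_sub_cancel_left] at hmem ⊢; exact hmem
        have j1 := (hlat (span F {x}) (span F {x + y}) ⊥ Wz hcol hWz).2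
        have j2 := (hlat (span F {x}) (span F {y}) ⊥ Wy hcol hWy).2
        rw [hspan] at j1
        have hWzy : Wz = Wy := by
          have h := j1.symm.trans j2
          have h' : (⊥ ⊔ Wz : Submodule F E₂) = (⊥ ⊔ Wy : Submodule F E₂) :=
            SetLike.coe_injective h
          simpa using h'
        -- span y ⊓ span (x+y) = ⊥
        have hmeet : (span F {y} ⊓ span F {x + y} : Submodule F E₁) = ⊥ := by
          rw [eq_bot_iff]
          intro v hv
          obtain ⟨hv1, hv2⟩ := Submodule.mem_inf.mp hv
          rw [mem_span_singleton] at hv1 hv2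
          obtain ⟨c, hc⟩ := hv1
          obtain ⟨d, hd⟩ := hv2
          by_cases hd0 : d = 0
          · simp only [hd0, zero_smul] at hd
            simpa [← hd] using (mem_bot F (M := E₁)).mpr rfl
          · exfalso
            -- d • x = (c - d) • y, so x ∈ span y, hence y ∈ span x
            have hdx : d • x = (c - d) • y := by
              have : c • y = d • x + d • y := by rw [← smul_add, hc, hd]
              rw [sub_smul]
              linear_combination (norm := module) this.symm
            have hxy : x = (d⁻¹ * (c - d)) • y := by
              rw [mul_smul, ← hdx, smul_smul, inv_mul_cancel₀ hd0, one_smul]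
            have he0 : d⁻¹ * (c - d) ≠ 0 := by
              intro h
              rw [h, zero_smul] at hxy
              exact hx hxy
            apply hy
            rw [mem_span_singleton]
            exact ⟨(d⁻¹ * (c - d))⁻¹, by rw [hxy, smul_smul, inv_mul_cancel₀ he0, one_smul]⟩
        have m := (hlat (span F {y}) (span F {x + y}) Wy Wz hWy hWz).1
        rw [hmeet, hbot, hWzy] at m
        have hWybot : Wy = ⊥ := by
          have : (⊥ : Submodule F E₂) = Wy ⊓ Wy := SetLike.coe_injective m
          simpa using this.symm
        have : φ y ∈ (Wy : Set E₂) := hWy ▸ ⟨y, mem_span_singleton_self y, rfl⟩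
        rw [hWybot] at this
        simpa using this
    obtain ⟨v, hv⟩ := exists_ne (0 : E₂)
    obtain ⟨u, hu⟩ := hsurj v
    exact hv (by rw [← hu, hall u])
  -- injectivity on each line through 0
  have hlineinj : ∀ x : E₁, x ≠ 0 →
      Set.InjOn φ ((span F {x} : Submodule F E₁) : Set E₁) := by
    intro x hx
    obtain ⟨W, hW⟩ := hφ (span F {x})
    have hWne : W ≠ ⊥ := by
      intro h
      exact hline x hx (by rw [hW, h])
    have hWrank : 1 ≤ Module.finrank F W := by
      have : Nontrivial W := Submodule.nontrivial_iff_ne_bot.mpr hWne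
      exact Module.finrank_pos
    have hs : ((span F {x} : Submodule F E₁) : Set E₁).ncard = Fintype.card F := by
      rw [← Nat.card_coe_set_eq]
      have h := hcard1 (span F {x})
      rw [finrank_span_singleton hx, pow_one] at h
      exact h
    have himle : (φ '' ((span F {x} : Submodule F E₁) : Set E₁)).ncard
        ≤ ((span F {x} : Submodule F E₁) : Set E₁).ncard :=
      Set.ncard_image_le (Set.toFinite _)
    have hWcard : ((W : Set E₂)).ncard = Fintype.card F ^ Module.finrank F W := by
      rw [← Nat.card_coe_set_eq]
      exact hcard2 W
    have hle : Fintype.card F ^ Module.finrank F ↥W ≤ Fintype.card F ^ 1 := by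
      rw [pow_one, ← hWcard, ← hW]
      rw [hs] at himle
      exact himle
    have hd1 : Module.finrank F ↥W = 1 := by
      have := (Nat.pow_le_pow_iff_right hq).mp hle
      omega
    apply Set.injOn_of_ncard_image_eq _ (Set.toFinite _)
    rw [hW, hWcard, hd1, pow_one, hs]
  -- φ x ≠ 0 for x ≠ 0
  have hker : ∀ x : E₁, φ x = 0 → x = 0 := by
    intro x hx
    by_contra hx0
    exact hx0 (hlineinj x hx0 (mem_span_singleton_self x) (zero_mem _) (by rw [hx, hz]))
  -- injectivity
  refine ⟨fun a b hab => ?_, hsurj⟩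
  by_cases ha : a = 0
  · rw [ha] at hab ⊢
    exact (hker b (by rw [← hab, hz])).symm
  · by_cases hb : b ∈ span F {a}
    · exact hlineinj a ha (mem_span_singleton_self a) hb hab
    · exfalso
      have hb0 : b ≠ 0 := fun h => hb (h ▸ zero_mem _)
      obtain ⟨Wa, hWa⟩ := hφ (span F {a})
      obtain ⟨Wb, hWb⟩ := hφ (span F {b})
      have hmeet : (span F {a} ⊓ span F {b} : Submodule F E₁) = ⊥ := by
        rw [eq_bot_iff]
        intro v hv
        obtain ⟨hv1, hv2⟩ := Submodule.mem_inf.mp hv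
        rw [mem_span_singleton] at hv1 hv2
        obtain ⟨c, hc⟩ := hv1
        obtain ⟨d, hd⟩ := hv2
        by_cases hd0 : d = 0
        · have hv0 : v = 0 := by rw [← hd, hd0, zero_smul]
          rw [mem_bot]
          exact hv0
        · exfalso
          apply hb
          rw [mem_span_singleton]
          refine ⟨d⁻¹ * c, ?_⟩
          rw [mul_smul, hc, ← hd, smul_smul, inv_mul_cancel₀ hd0, one_smul]
      have m := (hlat (span F {a}) (span F {b}) Wa Wb hWa hWb).1
      rw [hmeet, hbot] at m
      have hfa : φ a ∈ (Wa : Set E₂) := hWa ▸ ⟨a, mem_span_singleton_self a, rfl⟩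
      have hfb : φ a ∈ (Wb : Set E₂) := by
        rw [hab]
        exact hWb ▸ ⟨b, mem_span_singleton_self b, rfl⟩
      have : φ a ∈ ((Wa ⊓ Wb : Submodule F E₂) : Set E₂) := ⟨hfa, hfb⟩
      rw [← m] at this
      have : φ a = 0 := by simpa using this
      exact ha (hker a this)
end

section
/- Let φ, ψ : E₁ → E₂ be linear maps that induce the same map on subspace lattices (φ(V) = ψ(V) for all subspaces V ≤ E₁). Then there exists λ ∈ 𝔽* such that φ = λψ. -/
open Submodule

/-- Two linear maps inducing the same map on subspace lattices differ by a
nonzero scalar. -/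
theorem stmt5 {F : Type*} [Field F] [Fintype F]
    {E₁ E₂ : Type*} [AddCommGroup E₁] [Module F E₁] [FiniteDimensional F E₁]
    [AddCommGroup E₂] [Module F E₂] [FiniteDimensional F E₂]
    (φ ψ : E₁ →ₗ[F] E₂)
    (heq : ∀ V : Submodule F E₁, Submodule.map φ V = Submodule.map ψ V) :
    ∃ c : Fˣ, φ = (c : F) • ψ := by
  have hspan : ∀ x : E₁, Submodule.span F {φ x} = Submodule.span F {ψ x} := by
    intro x
    have := heq (span F {x})
    simpa [Submodule.map_span, Set.image_singleton] using this
  have key : ∀ x : E₁, ∃ a : F, φ x = a • ψ x := by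
    intro x
    have h : φ x ∈ Submodule.span F {ψ x} := by
      rw [← hspan x]; exact Submodule.mem_span_singleton_self _
    obtain ⟨a, ha⟩ := Submodule.mem_span_singleton.mp h
    exact ⟨a, ha.symm⟩
  have hker : ∀ x : E₁, ψ x = 0 → φ x = 0 := by
    intro x hx
    obtain ⟨a, ha⟩ := key x
    rw [ha, hx, smul_zero]
  have hker' : ∀ x : E₁, φ x = 0 → ψ x = 0 := by
    intro x hx
    have h : ψ x ∈ Submodule.span F {φ x} := by
      rw [hspan x]; exact Submodule.mem_span_singleton_self _
    obtain ⟨a, ha⟩ := Submodule.mem_span_singleton.mp h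
    rw [← ha, hx, smul_zero]
  by_cases hψ : ψ = 0
  · refine ⟨1, ?_⟩
    ext x
    simp [hψ, hker x (by simp [hψ])]
  · obtain ⟨x₀, hx₀⟩ : ∃ x₀, ψ x₀ ≠ 0 := by
      by_contra h
      push_neg at h
      exact hψ (by ext x; simp [h x])
    obtain ⟨c, hc⟩ := key x₀
    have hcne : c ≠ 0 := by
      intro h
      apply hx₀
      apply hker' x₀
      rw [hc, h, zero_smul]
    refine ⟨Units.mk0 c hcne, ?_⟩
    ext y
    simp only [LinearMap.smul_apply, Units.val_mk0]
    by_cases hy : ψ y = 0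
    · rw [hker y hy, hy, smul_zero]
    · by_cases hdep : ∃ t : F, ψ y = t • ψ x₀
      · obtain ⟨t, ht⟩ := hdep
        have h0 : ψ (y - t • x₀) = 0 := by
          simp [map_sub, ht]
        have h1 : φ (y - t • x₀) = 0 := hker _ h0
        have h2 : φ y = t • φ x₀ := by
          have := h1
          rw [map_sub, map_smul, sub_eq_zero] at this
          exact this
        rw [h2, hc, ht, smul_smul, smul_smul, mul_comm]
      · obtain ⟨a, ha⟩ := key y
        obtain ⟨b, hb⟩ := key (x₀ + y)
        have heq2 : (c - b) • ψ x₀ + (a - b) • ψ y = 0 := by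
          have : φ x₀ + φ y = b • ψ x₀ + b • ψ y := by
            rw [← map_add, hb, map_add, smul_add]
          rw [hc, ha] at this
          rw [sub_smul, sub_smul]
          abel_nf
          linear_combination (norm := module) this
        have hab : a = b := by
          by_contra hne
          apply hdep
          refine ⟨(a - b)⁻¹ * (b - c), ?_⟩
          have hab0 : a - b ≠ 0 := sub_ne_zero.mpr hne
          have h3 : (a - b) • ψ y = (b - c) • ψ x₀ := by
            linear_combination (norm := module) heq2
          have h4 := congrArg (fun v => (a - b)⁻¹ • v) h3
          simp only [inv_smul_smul₀ hab0, smul_smul] at h4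
          exact h4
        have hcb : c = b := by
          rw [hab] at heq2
          simp only [sub_self, zero_smul, add_zero] at heq2
          by_contra hne
          exact hx₀ (by
            have := smul_eq_zero.mp heq2
            rcases this with h | h
            · exact absurd (sub_eq_zero.mp h) hne
            · exact h)
        rw [ha, hab, ← hcb]
end

section
/- Let G ∈ 𝔽_{q^m}^{k×n} have rank k and define ρ(V) = rank(G Yᵀ) where V = rowspace(Y). Then ρ satisfies the q-matroid axioms: 0 ≤ ρ(V) ≤ dim V, monotonicity, and submodularity ρ(V+W) + ρ(V∩W) ≤ ρ(V) + ρ(W). -/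
open Submodule Module

/-- The rank function represented by a matrix `G` over a field extension `K` of `F`:
`ρ(V)` is the `K`-dimension of the span of `{G·v̄ : v ∈ V}`, which equals
`rank (G Yᵀ)` whenever `V` is the row space of `Y`. -/
noncomputable def repRho {F K : Type*} [Field F] [Field K] [Algebra F K]
    {k n : ℕ} (G : Matrix (Fin k) (Fin n) K) (V : Submodule F (Fin n → F)) : ℕ :=
  finrank K (span K
    ((fun v : Fin n → F => G.mulVec fun j => algebraMap F K (v j)) '' (V : Set (Fin n → F))))

/-!
The map `v ↦ G v̄` is `F`-linear, so `ρ` is the composite of `V ↦ G V̄` with the function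
`P ↦ dim_K (K-span of P)` on `F`-subspaces of `K^k`. The latter is bounded by `dim_F`, monotone,
and submodular, because `K`-span turns `⊔` into `⊔`, sends `⊓` below `⊓`, and `dim_K` is modular
on `K`-subspaces; pulling back along a linear map preserves all three properties.
-/

section SpanOfTower

variable {F K N : Type*} [Field F] [Field K] [Algebra F K]
  [AddCommGroup N] [Module K N] [Module F N] [IsScalarTower F K N]

variable (K) in
theorem finrank_span_coe_le_finrank (P : Submodule F N) [FiniteDimensional F P] :
    finrank K (span K (P : Set N)) ≤ finrank F P := by
  let b := finBasis F P
  have hP : span F (Set.range (P.subtype ∘ b)) = P := by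
    rw [Set.range_comp, ← Submodule.map_span, b.span_eq, Submodule.map_top, range_subtype]
  calc finrank K (span K (P : Set N))
      = finrank K (span K (Set.range (P.subtype ∘ b))) := by
        conv_lhs => rw [← hP, span_span_of_tower]
    _ ≤ Fintype.card (Fin (finrank F P)) := finrank_range_le_card _
    _ = finrank F P := Fintype.card_fin _

theorem span_coe_sup_of_tower (P Q : Submodule F N) :
    span K ((P ⊔ Q : Submodule F N) : Set N) = span K (P : Set N) ⊔ span K (Q : Set N) := by
  rw [← span_union, ← span_span_of_tower F K ((P : Set N) ∪ Q), span_union, span_eq, span_eq]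

theorem finrank_span_coe_sup_add_finrank_span_coe_inf_le [FiniteDimensional K N]
    (P Q : Submodule F N) :
    finrank K (span K ((P ⊔ Q : Submodule F N) : Set N)) +
        finrank K (span K ((P ⊓ Q : Submodule F N) : Set N)) ≤
      finrank K (span K (P : Set N)) + finrank K (span K (Q : Set N)) := by
  have h_inf :
      span K ((P ⊓ Q : Submodule F N) : Set N) ≤ span K (P : Set N) ⊓ span K (Q : Set N) :=
    le_inf (span_mono inf_le_left) (span_mono inf_le_right)
  rw [span_coe_sup_of_tower, ← finrank_sup_add_finrank_inf_eq (span K (P : Set N))]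
  exact Nat.add_le_add_left (finrank_mono h_inf) _

end SpanOfTower

section Representation

variable {F K : Type*} [Field F] [Field K] [Algebra F K] {k n : ℕ}

noncomputable def Matrix.mulVecAlgebraMap (G : Matrix (Fin k) (Fin n) K) :
    (Fin n → F) →ₗ[F] (Fin k → K) :=
  G.mulVecLin.restrictScalars F ∘ₗ (Algebra.linearMap F K).compLeft (Fin n)

theorem repRho_eq_finrank_span_map (G : Matrix (Fin k) (Fin n) K) (V : Submodule F (Fin n → F)) :
    repRho G V = finrank K (span K (V.map G.mulVecAlgebraMap : Set (Fin k → K))) :=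
  rfl

end Representation

theorem stmt9_general {F K : Type*} [Field F] [Field K] [Algebra F K]
    {k n : ℕ} (G : Matrix (Fin k) (Fin n) K) :
    (∀ V : Submodule F (Fin n → F), repRho G V ≤ finrank F V) ∧
    (∀ V W : Submodule F (Fin n → F), V ≤ W → repRho G V ≤ repRho G W) ∧
    (∀ V W : Submodule F (Fin n → F),
      repRho G (V ⊔ W) + repRho G (V ⊓ W) ≤ repRho G V + repRho G W) := by
  set f := G.mulVecAlgebraMap (F := F)
  simp only [repRho_eq_finrank_span_map]
  refine ⟨fun V => ?_, fun V W hVW => ?_, fun V W => ?_⟩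
  · exact (finrank_span_coe_le_finrank K _).trans (finrank_map_le f V)
  · exact finrank_mono (span_mono (map_mono hVW))
  · have h_inf : finrank K (span K (map f (V ⊓ W) : Set (Fin k → K))) ≤
        finrank K (span K ((map f V ⊓ map f W : Submodule F _) : Set (Fin k → K))) :=
      finrank_mono (span_mono (map_inf_le f))
    rw [Submodule.map_sup]
    exact (Nat.add_le_add_left h_inf _).trans
      (finrank_span_coe_sup_add_finrank_span_coe_inf_le _ _)

/-- The rank function represented by a full-row-rank matrix over a finite field
extension satisfies the `q`-matroid axioms (R1)–(R3). -/
theorem stmt9 {F K : Type*} [Field F] [Fintype F] [Field K] [Fintype K] [Algebra F K]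
    {k n : ℕ} (G : Matrix (Fin k) (Fin n) K) (hG : G.rank = k) :
    (∀ V : Submodule F (Fin n → F), repRho G V ≤ finrank F V) ∧
    (∀ V W : Submodule F (Fin n → F), V ≤ W → repRho G V ≤ repRho G W) ∧
    (∀ V W : Submodule F (Fin n → F),
      repRho G (V ⊔ W) + repRho G (V ⊓ W) ≤ repRho G V + repRho G W) :=
  stmt9_general G
end

section
/- Let φ : E₁ → E₂ be a bijective L-map between ground spaces of q-matroids M₁ = (E₁, ρ₁) and M₂ = (E₂, ρ₂). Then the following are equivalent: (i) both φ and φ⁻¹ are weak maps; (ii) φ is rank-preserving (ρ₂(φ(V)) = ρ₁(V) for all V); (iii) both φ and φ⁻¹ are strong maps. -/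
open Submodule Module

/-- A `q`-matroid rank function: dimension-bounded, monotone, submodular. -/
def IsQMatroid {F E : Type*} [Field F] [AddCommGroup E] [Module F E]
    (ρ : Submodule F E → ℕ) : Prop :=
  (∀ V, ρ V ≤ finrank F V) ∧ (∀ V W, V ≤ W → ρ V ≤ ρ W) ∧
  (∀ V W, ρ (V ⊔ W) + ρ (V ⊓ W) ≤ ρ V + ρ W)

/-- A flat: a subspace whose rank increases under any strict enlargement. -/
def IsFlat {F E : Type*} [Field F] [AddCommGroup E] [Module F E]
    (ρ : Submodule F E → ℕ) (V : Submodule F E) : Prop :=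
  ∀ W : Submodule F E, V < W → ρ V < ρ W

/-- A weak map: the rank of the image of any subspace does not exceed its rank. -/
def IsWeakMap {F E₁ E₂ : Type*} [Field F] [AddCommGroup E₁] [Module F E₁]
    [AddCommGroup E₂] [Module F E₂] (ρ₁ : Submodule F E₁ → ℕ)
    (ρ₂ : Submodule F E₂ → ℕ) (φ : E₁ → E₂) : Prop :=
  ∀ (V : Submodule F E₁) (W : Submodule F E₂), φ '' (V : Set E₁) = (W : Set E₂) → ρ₂ W ≤ ρ₁ V

/-- A rank-preserving map: the rank of the image of any subspace equals its rank. -/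
def IsRankPreserving {F E₁ E₂ : Type*} [Field F] [AddCommGroup E₁] [Module F E₁]
    [AddCommGroup E₂] [Module F E₂] (ρ₁ : Submodule F E₁ → ℕ)
    (ρ₂ : Submodule F E₂ → ℕ) (φ : E₁ → E₂) : Prop :=
  ∀ (V : Submodule F E₁) (W : Submodule F E₂), φ '' (V : Set E₁) = (W : Set E₂) → ρ₂ W = ρ₁ V

/-- A strong map: the preimage of every flat is a flat. -/
def IsStrongMap {F E₁ E₂ : Type*} [Field F] [AddCommGroup E₁] [Module F E₁]
    [AddCommGroup E₂] [Module F E₂] (ρ₁ : Submodule F E₁ → ℕ)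
    (ρ₂ : Submodule F E₂ → ℕ) (φ : E₁ → E₂) : Prop :=
  ∀ F₂ : Submodule F E₂, IsFlat ρ₂ F₂ →
    ∃ F₁ : Submodule F E₁, φ ⁻¹' (F₂ : Set E₂) = (F₁ : Set E₁) ∧ IsFlat ρ₁ F₁

open Function

/-! A bijective `L`-map over a finite field induces an isomorphism `e` of subspace lattices: it is
an order embedding between two finite lattices of the same size. Being rank-preserving then means
`ρ₂ ∘ e = ρ₁`, which is the conjunction of the two weak-map inequalities and which makes `e` match
the flats of `ρ₁` with those of `ρ₂`. Conversely, if `e` matches flats, the ranks agree by induction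
along coverings `U ⋖ V`: the rank goes up by at most one, and it stays put exactly when every flat
containing `U` contains `V`, a condition expressed in the lattice and flats alone. -/

section MapCriteria

variable {F E₁ E₂ : Type*} [Field F] [AddCommGroup E₁] [Module F E₁]
  [AddCommGroup E₂] [Module F E₂] {ρ₁ : Submodule F E₁ → ℕ} {ρ₂ : Submodule F E₂ → ℕ}
  {ψ : E₁ → E₂}

theorem isWeakMap_iff_of_image_eq {f : Submodule F E₁ → Submodule F E₂}
    (hf : ∀ V : Submodule F E₁, ψ '' V = f V) :
    IsWeakMap ρ₁ ρ₂ ψ ↔ ∀ V, ρ₂ (f V) ≤ ρ₁ V := by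
  refine ⟨fun h V => h V (f V) (hf V), fun h V W hVW => ?_⟩
  obtain rfl : W = f V := SetLike.coe_injective (hVW.symm.trans (hf V))
  exact h V

theorem isRankPreserving_iff_of_image_eq {f : Submodule F E₁ → Submodule F E₂}
    (hf : ∀ V : Submodule F E₁, ψ '' V = f V) :
    IsRankPreserving ρ₁ ρ₂ ψ ↔ ∀ V, ρ₂ (f V) = ρ₁ V := by
  refine ⟨fun h V => h V (f V) (hf V), fun h V W hVW => ?_⟩
  obtain rfl : W = f V := SetLike.coe_injective (hVW.symm.trans (hf V))
  exact h V

theorem isStrongMap_iff_of_preimage_eq {g : Submodule F E₂ → Submodule F E₁}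
    (hg : ∀ W : Submodule F E₂, ψ ⁻¹' W = g W) :
    IsStrongMap ρ₁ ρ₂ ψ ↔ ∀ W, IsFlat ρ₂ W → IsFlat ρ₁ (g W) := by
  refine forall_congr' fun W => imp_congr_right fun _ => ⟨?_, fun h => ⟨g W, hg W, h⟩⟩
  rintro ⟨V, hV, hflat⟩
  rwa [SetLike.coe_injective (hV.symm.trans (hg W))] at hflat

theorem isFlat_apply_iff (e : Submodule F E₁ ≃o Submodule F E₂) (he : ∀ V, ρ₂ (e V) = ρ₁ V)
    (G : Submodule F E₁) : IsFlat ρ₂ (e G) ↔ IsFlat ρ₁ G := by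
  rw [IsFlat, IsFlat, e.surjective.forall]
  simp only [e.lt_iff_lt, he]

end MapCriteria

theorem IsLMap.exists_orderIso {F E₁ E₂ : Type*} [Field F] [Fintype F]
    [AddCommGroup E₁] [Module F E₁] [FiniteDimensional F E₁]
    [AddCommGroup E₂] [Module F E₂] [FiniteDimensional F E₂]
    {φ : E₁ → E₂} (hφ : IsLMap F φ) (hbij : Bijective φ) :
    ∃ e : Submodule F E₁ ≃o Submodule F E₂, ∀ V : Submodule F E₁, φ '' V = e V := by
  choose f hf using hφ
  have hf_le : ∀ V V', f V ≤ f V' ↔ V ≤ V' := fun V V' => by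
    rw [← SetLike.coe_subset_coe, ← hf, ← hf, Set.image_subset_image_iff hbij.1,
      SetLike.coe_subset_coe]
  have : Finite E₁ := Module.finite_of_finite F
  have : Finite (Submodule F E₁) := Finite.of_injective _ SetLike.coe_injective
  have hdim : finrank F E₁ = finrank F E₂ := by
    have hcard := Nat.card_eq_of_bijective φ hbij
    rw [Module.natCard_eq_pow_finrank (K := F) (V := E₁),
      Module.natCard_eq_pow_finrank (K := F) (V := E₂)] at hcard
    exact Nat.pow_right_injective Finite.one_lt_card hcard
  let f' := OrderEmbedding.ofMapLEIff f hf_le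
  have hsurj : Surjective f' :=
    (Finite.injective_iff_surjective_of_equiv
      (orderIsoMapComap (LinearEquiv.ofFinrankEq E₁ E₂ hdim)).toEquiv).mp f'.injective
  exact ⟨OrderIso.ofSurjective f' hsurj, hf⟩

namespace IsQMatroid

variable {F E : Type*} [Field F] [AddCommGroup E] [Module F E] {ρ : Submodule F E → ℕ}

theorem rank_bot (h : IsQMatroid ρ) : ρ ⊥ = 0 :=
  Nat.le_zero.mp ((h.1 ⊥).trans_eq (finrank_bot F E))

theorem rank_le_add_one_of_covBy (h : IsQMatroid ρ) {U V : Submodule F E} (hUV : U ⋖ V) :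
    ρ V ≤ ρ U + 1 := by
  obtain ⟨hdim, -, hsub⟩ := h
  obtain ⟨x, hxV, hxU⟩ := SetLike.exists_of_lt hUV.lt
  have hV : U ⊔ span F {x} = V := by
    refine (hUV.eq_or_eq le_sup_left (sup_le hUV.le ((span_singleton_le_iff_mem x V).mpr hxV))
      ).resolve_left fun hU => hxU ?_
    exact hU ▸ mem_sup_right (mem_span_singleton_self x)
  have hx : ρ (span F {x}) ≤ 1 :=
    (hdim _).trans ((finrank_span_le_card ({x} : Set E)).trans (by simp))
  have := hsub U (span F {x})
  rw [hV] at this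
  omega

theorem le_of_isFlat (h : IsQMatroid ρ) {U V G : Submodule F E} (hG : IsFlat ρ G)
    (hUG : U ≤ G) (hUV : U ≤ V) (hρ : ρ V ≤ ρ U) : V ≤ G := by
  obtain ⟨-, hmono, hsub⟩ := h
  by_contra hVG
  have hlt := hG _ (left_lt_sup.mpr hVG)
  have := hsub G V
  have := hmono _ _ (le_inf hUG hUV)
  omega

theorem exists_isFlat_le_rank_eq [FiniteDimensional F E] (h : IsQMatroid ρ)
    (U : Submodule F E) : ∃ G, U ≤ G ∧ ρ G = ρ U ∧ IsFlat ρ G := by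
  obtain ⟨-, hmono, -⟩ := h
  obtain ⟨G, ⟨hUG, hGU⟩, hmax⟩ :=
    WellFoundedGT.exists_maximal wellFoundedGT {W | U ≤ W ∧ ρ W ≤ ρ U} ⟨U, le_rfl, le_rfl⟩
  refine ⟨G, hUG, le_antisymm hGU (hmono _ _ hUG), fun W hGW => ?_⟩
  by_contra! hWG
  exact hGW.not_ge (hmax ⟨hUG.trans hGW.le, hWG.trans hGU⟩ hGW.le)

theorem rank_eq_iff_forall_isFlat [FiniteDimensional F E] (h : IsQMatroid ρ)
    {U V : Submodule F E} (hUV : U ≤ V) :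
    ρ V = ρ U ↔ ∀ G, IsFlat ρ G → U ≤ G → V ≤ G := by
  refine ⟨fun hρ G hG hUG => h.le_of_isFlat hG hUG hUV hρ.le, fun hV => ?_⟩
  obtain ⟨G, hUG, hGU, hG⟩ := h.exists_isFlat_le_rank_eq U
  exact le_antisymm ((h.2.1 _ _ (hV G hG hUG)).trans hGU.le) (h.2.1 _ _ hUV)

end IsQMatroid

theorem rank_apply_eq_of_isFlat_apply_iff {F E₁ E₂ : Type*} [Field F]
    [AddCommGroup E₁] [Module F E₁] [FiniteDimensional F E₁]
    [AddCommGroup E₂] [Module F E₂] [FiniteDimensional F E₂]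
    {ρ₁ : Submodule F E₁ → ℕ} {ρ₂ : Submodule F E₂ → ℕ}
    (h₁ : IsQMatroid ρ₁) (h₂ : IsQMatroid ρ₂) (e : Submodule F E₁ ≃o Submodule F E₂)
    (he : ∀ G, IsFlat ρ₂ (e G) ↔ IsFlat ρ₁ G) (V : Submodule F E₁) : ρ₂ (e V) = ρ₁ V := by
  induction V using WellFoundedLT.induction with | _ V ih => ?_
  rcases eq_bot_or_bot_lt V with rfl | hV
  · rw [e.map_bot, h₁.rank_bot, h₂.rank_bot]
  obtain ⟨U, -, hUV⟩ := exists_le_covBy_of_lt hV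
  have heUV : e U ⋖ e V := (apply_covBy_apply_iff e).mpr hUV
  have hflats : (∀ G, IsFlat ρ₂ G → e U ≤ G → e V ≤ G) ↔
      ∀ G, IsFlat ρ₁ G → U ≤ G → V ≤ G := by
    rw [e.surjective.forall]
    simp only [he, e.le_iff_le]
  rw [← h₁.rank_eq_iff_forall_isFlat hUV.le,
    ← h₂.rank_eq_iff_forall_isFlat heUV.le] at hflats
  have hrank_U := ih U hUV.lt
  have hstep₁ := h₁.rank_le_add_one_of_covBy hUV
  have hstep₂ := h₂.rank_le_add_one_of_covBy heUV
  have hmono₁ := h₁.2.1 _ _ hUV.le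
  have hmono₂ := h₂.2.1 _ _ heUV.le
  omega

/-- For a bijective `L`-map between `q`-matroids: being weak in both directions,
rank-preserving, and strong in both directions are all equivalent. -/
theorem stmt12 {F : Type*} [Field F] [Fintype F]
    {E₁ E₂ : Type*} [AddCommGroup E₁] [Module F E₁] [FiniteDimensional F E₁]
    [AddCommGroup E₂] [Module F E₂] [FiniteDimensional F E₂]
    (ρ₁ : Submodule F E₁ → ℕ) (ρ₂ : Submodule F E₂ → ℕ)
    (h₁ : IsQMatroid ρ₁) (h₂ : IsQMatroid ρ₂)
    (φ : E₁ → E₂) (hφ : IsLMap F φ) (hbij : Function.Bijective φ) :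
    ((IsWeakMap ρ₁ ρ₂ φ ∧ IsWeakMap ρ₂ ρ₁ (Function.invFun φ)) ↔ IsRankPreserving ρ₁ ρ₂ φ) ∧
    (IsRankPreserving ρ₁ ρ₂ φ ↔
      (IsStrongMap ρ₁ ρ₂ φ ∧ IsStrongMap ρ₂ ρ₁ (Function.invFun φ))) := by
  obtain ⟨e, himage⟩ := hφ.exists_orderIso hbij
  have hleft := leftInverse_invFun hbij.1
  have hright := rightInverse_invFun hbij.2
  have hpreimage (W : Submodule F E₂) : φ ⁻¹' W = e.symm W := by
    rw [← e.apply_symm_apply W, ← himage, Set.preimage_image_eq _ hbij.1, e.symm_apply_apply]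
  have hinv_image (W : Submodule F E₂) : invFun φ '' W = e.symm W := by
    rw [Set.image_eq_preimage_of_inverse hright hleft, hpreimage]
  have hinv_preimage (V : Submodule F E₁) : invFun φ ⁻¹' V = e V := by
    rw [← Set.image_eq_preimage_of_inverse hleft hright, himage]
  rw [isWeakMap_iff_of_image_eq himage, isWeakMap_iff_of_image_eq hinv_image,
    isRankPreserving_iff_of_image_eq himage, isStrongMap_iff_of_preimage_eq hpreimage,
    isStrongMap_iff_of_preimage_eq hinv_preimage]
  refine ⟨⟨fun ⟨hweak, hweak_inv⟩ V => le_antisymm (hweak V) (by simpa using hweak_inv (e V)),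
      fun hrank => ⟨fun V => (hrank V).le, fun W => by simpa using (hrank (e.symm W)).ge⟩⟩,
    ⟨fun hrank => ⟨fun W hW => (isFlat_apply_iff e hrank _).mp (by simpa using hW),
      fun V => (isFlat_apply_iff e hrank V).mpr⟩,
    fun ⟨hstrong, hstrong_inv⟩ => rank_apply_eq_of_isFlat_apply_iff h₁ h₂ e
      fun V => ⟨fun hV => by simpa using hstrong (e V) hV, hstrong_inv V⟩⟩⟩
end

section
/- Let M₁ = (E₁, ρ₁), M₂ = (E₂, ρ₂) be q-matroids, E = E₁ ⊕ E₂, and let ρ(V) = min over X ≤ V of (ρ₁(π₁(X)) + ρ₂(π₂(X)) + dim V − dim X) be the rank function of the direct sum M₁ ⊕ M₂. Then for every subspace V ≤ E₁ (embedded in E), ρ(V) = ρ₁(V); in particular the natural embedding ι₁ : M₁ → M₁ ⊕ M₂ is rank-preserving. -/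
open Submodule Module

/-- The rank function of the direct sum `M₁ ⊕ M₂`:
`ρ(V) = min { ρ₁(π₁(X)) + ρ₂(π₂(X)) + dim V − dim X : X ≤ V }`. -/
noncomputable def dsRho {F E₁ E₂ : Type*} [Field F] [AddCommGroup E₁] [Module F E₁]
    [AddCommGroup E₂] [Module F E₂]
    (ρ₁ : Submodule F E₁ → ℕ) (ρ₂ : Submodule F E₂ → ℕ)
    (V : Submodule F (E₁ × E₂)) : ℕ :=
  sInf {n : ℕ | ∃ X ≤ V, n = ρ₁ (X.map (LinearMap.fst F E₁ E₂)) +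
    ρ₂ (X.map (LinearMap.snd F E₁ E₂)) + (finrank F V - finrank F X)}

lemma rho_le_aux {F E : Type*} [Field F] [AddCommGroup E] [Module F E]
    [FiniteDimensional F E] (ρ : Submodule F E → ℕ) (h : IsQMatroid ρ)
    {X V : Submodule F E} (hXV : X ≤ V) :
    ρ V ≤ ρ X + (finrank F V - finrank F X) := by
  obtain ⟨W₀, hc⟩ := Submodule.exists_isCompl X
  set W := W₀ ⊓ V with hW
  have hsup : X ⊔ W = V := by
    rw [hW, ← sup_inf_assoc_of_le _ hXV, hc.sup_eq_top, top_inf_eq]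
  have hinf : X ⊓ W = ⊥ := by
    have : X ⊓ W ≤ X ⊓ W₀ := inf_le_inf_left _ inf_le_left
    rw [hc.inf_eq_bot] at this
    exact le_bot_iff.mp this
  have hdim : finrank F X + finrank F W = finrank F V := by
    have := Submodule.finrank_sup_add_finrank_inf_eq X W
    rw [hsup, hinf, finrank_bot] at this
    omega
  calc ρ V = ρ (X ⊔ W) := by rw [hsup]
    _ ≤ ρ (X ⊔ W) + ρ (X ⊓ W) := Nat.le_add_right _ _
    _ ≤ ρ X + ρ W := h.2.2 X W
    _ ≤ ρ X + finrank F W := by have := h.1 W; omega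
    _ = ρ X + (finrank F V - finrank F X) := by omega

/-- The natural embedding `ι₁ : M₁ → M₁ ⊕ M₂` is rank-preserving:
`ρ(ι₁(V)) = ρ₁(V)` for all subspaces `V ≤ E₁`. -/
theorem stmt15 {F : Type*} [Field F] [Fintype F]
    {E₁ E₂ : Type*} [AddCommGroup E₁] [Module F E₁] [FiniteDimensional F E₁]
    [AddCommGroup E₂] [Module F E₂] [FiniteDimensional F E₂]
    (ρ₁ : Submodule F E₁ → ℕ) (ρ₂ : Submodule F E₂ → ℕ)
    (h₁ : IsQMatroid ρ₁) (h₂ : IsQMatroid ρ₂) :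
    ∀ V : Submodule F E₁, dsRho ρ₁ ρ₂ (V.map (LinearMap.inl F E₁ E₂)) = ρ₁ V := by
  intro V
  have hρ₂bot : ρ₂ ⊥ = 0 := by
    have := h₂.1 ⊥
    simpa [finrank_bot] using this
  have hinj : Function.Injective (LinearMap.inl F E₁ E₂) := LinearMap.inl_injective
  have hrank : ∀ (U : Submodule F E₁),
      finrank F (U.map (LinearMap.inl F E₁ E₂)) = finrank F U := fun U =>
    (LinearEquiv.finrank_eq (Submodule.equivMapOfInjective _ hinj U)).symm
  have hfst : (V.map (LinearMap.inl F E₁ E₂)).map (LinearMap.fst F E₁ E₂) = V := by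
    rw [← Submodule.map_comp, LinearMap.fst_comp_inl, Submodule.map_id]
  have hsnd : (V.map (LinearMap.inl F E₁ E₂)).map (LinearMap.snd F E₁ E₂) = ⊥ := by
    rw [← Submodule.map_comp, LinearMap.snd_comp_inl, Submodule.map_zero]
  have hmem : ρ₁ V ∈ {n : ℕ | ∃ X ≤ V.map (LinearMap.inl F E₁ E₂),
      n = ρ₁ (X.map (LinearMap.fst F E₁ E₂)) +
        ρ₂ (X.map (LinearMap.snd F E₁ E₂)) +
        (finrank F (V.map (LinearMap.inl F E₁ E₂)) - finrank F X)} := by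
    exact ⟨V.map (LinearMap.inl F E₁ E₂), le_rfl, by
      rw [hfst, hsnd, hρ₂bot]; omega⟩
  refine le_antisymm (Nat.sInf_le hmem) (le_csInf ⟨_, hmem⟩ ?_)
  rintro n ⟨X, hXle, rfl⟩
  -- X is contained in E₁ × 0, so X = map inl X₁ with X₁ = map fst X
  set X₁ := X.map (LinearMap.fst F E₁ E₂) with hX₁
  have hXeq : X = X₁.map (LinearMap.inl F E₁ E₂) := by
    apply le_antisymm
    · rintro ⟨a, b⟩ hab
      obtain ⟨x, hxV, hx⟩ := hXle hab
      have hb : b = 0 := by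
        have := congrArg Prod.snd hx
        simpa using this.symm
      exact ⟨a, ⟨⟨a, b⟩, hab, rfl⟩, by simp [hb]⟩
    · rintro _ ⟨a, ⟨⟨a', b'⟩, hab', ha'⟩, rfl⟩
      obtain ⟨x, hxV, hx⟩ := hXle hab'
      have hb : b' = 0 := by
        have := congrArg Prod.snd hx
        simpa using this.symm
      simp only [LinearMap.fst_apply] at ha'
      subst ha'
      simpa [LinearMap.inl_apply, ← hb] using hab'
  have hXsnd : X.map (LinearMap.snd F E₁ E₂) = ⊥ := by
    rw [hXeq, ← Submodule.map_comp, LinearMap.snd_comp_inl, Submodule.map_zero]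
  have hX₁V : X₁ ≤ V := by
    rw [hXeq] at hXle
    exact (Submodule.map_le_map_iff_of_injective hinj _ _).mp hXle
  have hdX : finrank F X = finrank F X₁ := by rw [hXeq, hrank]
  rw [hXsnd, hρ₂bot, hrank, hdX]
  have := rho_le_aux ρ₁ h₁ hX₁V
  omega
end

section
/- Let φ : M₁ → M₂ be a linear map between q-matroids M₁ = (E₁, ρ₁), M₂ = (E₂, ρ₂) which is not a weak map. Then there exists a circuit C of M₁ such that ρ₂(φ(C)) > ρ₁(C), dim φ(C) = dim C, and φ(C) is an independent space of M₂. -/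
open Submodule Module

/-- A circuit: a dependent subspace all of whose proper subspaces are independent. -/
def IsCircuit {F E : Type*} [Field F] [AddCommGroup E] [Module F E]
    (ρ : Submodule F E → ℕ) (C : Submodule F E) : Prop :=
  ρ C ≠ finrank F C ∧ ∀ W : Submodule F E, W < C → ρ W = finrank F W

section Aux
variable {F E : Type*} [Field F] [AddCommGroup E] [Module F E] [FiniteDimensional F E]
variable {ρ : Submodule F E → ℕ}

lemma finrank_sup_span {U : Submodule F E} {x : E} (hx : x ∉ U) :
    finrank F ↥(U ⊔ span F {x}) = finrank F U + 1 := by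
  have hx0 : x ≠ 0 := fun h => hx (h ▸ U.zero_mem)
  have hinf : U ⊓ span F {x} = ⊥ := by
    rw [eq_bot_iff]
    rintro y ⟨hyU, hys⟩
    obtain ⟨c, rfl⟩ := mem_span_singleton.mp hys
    rcases eq_or_ne c 0 with rfl | hc
    · simp
    · exact absurd (by simpa [smul_smul, inv_mul_cancel₀ hc] using U.smul_mem c⁻¹ hyU) hx
  have := Submodule.finrank_sup_add_finrank_inf_eq U (span F {x})
  rw [hinf, finrank_bot, finrank_span_singleton hx0] at this
  omega

lemma rank_sup_span_le (hρ : IsQMatroid ρ) (U : Submodule F E) (x : E) :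
    ρ (U ⊔ span F {x}) ≤ ρ U + 1 := by
  have h1 : ρ (span F {x}) ≤ 1 := by
    refine (hρ.1 _).trans ?_
    rcases eq_or_ne x 0 with rfl | hx0
    · rw [show span F ({0} : Set E) = ⊥ from span_zero_singleton F, finrank_bot]; omega
    · rw [finrank_span_singleton hx0]
  have := hρ.2.2 U (span F {x})
  omega

lemma rank_add_finrank_le (hρ : IsQMatroid ρ) {U W : Submodule F E} (h : U ≤ W) :
    ρ W + finrank F U ≤ ρ U + finrank F W := by
  suffices H : ∀ k (U W : Submodule F E), U ≤ W → finrank F W ≤ finrank F U + k →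
      ρ W + finrank F U ≤ ρ U + finrank F W by
    exact H (finrank F W) U W h (by omega)
  intro k
  induction k with
  | zero =>
    intro U W hUW hle
    have : U = W := Submodule.eq_of_le_of_finrank_le hUW (by omega)
    subst this; omega
  | succ k ih =>
    intro U W hUW hle
    rcases eq_or_ne U W with rfl | hne
    · omega
    obtain ⟨x, hxW, hxU⟩ := SetLike.exists_of_lt (lt_of_le_of_ne hUW hne)
    set U' := U ⊔ span F {x} with hU'
    have hU'W : U' ≤ W := sup_le hUW (by rwa [span_le, Set.singleton_subset_iff])
    have hdim : finrank F U' = finrank F U + 1 := finrank_sup_span hxU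
    have h1 := ih U' W hU'W (by omega)
    have h2 := rank_sup_span_le hρ U x
    rw [← hU'] at h2
    omega

end Aux

section Aux2
set_option linter.unusedSectionVars false
variable {F E : Type*} [Field F] [AddCommGroup E] [Module F E] [FiniteDimensional F E]
variable {ρ : Submodule F E → ℕ}

/-- A hyperplane of `X` avoiding a given nonzero `x ∈ X`. -/
lemma exists_hyperplane_avoiding {X : Submodule F E} {x : E} (hx : x ∈ X) (hx0 : x ≠ 0) :
    ∃ A : Submodule F E, A ≤ X ∧ x ∉ A ∧ finrank F A + 1 = finrank F X ∧
      A ⊔ span F {x} = X := by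
  set x' : X := ⟨x, hx⟩ with hx'
  have hx'0 : x' ≠ 0 := fun h => hx0 (congrArg Subtype.val h)
  obtain ⟨A', hA'⟩ := (span F {x'}).exists_isCompl
  refine ⟨A'.map X.subtype, Submodule.map_subtype_le X A', ?_, ?_, ?_⟩
  · intro hmem
    rw [Submodule.mem_map] at hmem
    obtain ⟨a, haA', ha⟩ := hmem
    have ha' : a = x' := Subtype.ext ha
    rw [ha'] at haA'
    have hmem2 : x' ∈ span F {x'} ⊓ A' := ⟨mem_span_singleton_self _, haA'⟩
    rw [hA'.inf_eq_bot] at hmem2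
    exact hx'0 (by simpa using hmem2)
  · have h1 : finrank F ↥(span F {x'}) + finrank F A' = finrank F X :=
      Submodule.finrank_add_eq_of_isCompl hA'
    rw [finrank_span_singleton hx'0] at h1
    rw [Submodule.finrank_map_subtype_eq]
    omega
  · have h2 : (span F {x'} ⊔ A').map X.subtype = X := by
      rw [hA'.sup_eq_top, Submodule.map_top, Submodule.range_subtype]
    rw [Submodule.map_sup] at h2
    have h3 : (span F {x'}).map X.subtype = span F {x} := by
      rw [Submodule.map_span]
      simp [hx']
    rw [h3] at h2
    rw [sup_comm]
    exact h2

lemma indep_of_hyperplanes (hρ : IsQMatroid ρ) :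
    ∀ n (X : Submodule F E), finrank F X ≤ n →
      (∀ U, U ≤ X → finrank F U + 1 = finrank F X → ρ U + 1 ≤ ρ X) →
      ρ X = finrank F X := by
  intro n
  induction n with
  | zero =>
    intro X h _
    have := hρ.1 X
    omega
  | succ n ih =>
    intro X hXn H
    rcases Nat.eq_zero_or_pos (finrank F X) with h0 | hpos
    · have := hρ.1 X; omega
    have hXbot : X ≠ ⊥ := by
      rintro rfl
      rw [finrank_bot] at hpos
      omega
    obtain ⟨x, hxX, hx0⟩ := Submodule.exists_mem_ne_zero_of_ne_bot hXbot
    obtain ⟨U₁, hU₁X, hxU₁, hU₁dim, -⟩ := exists_hyperplane_avoiding hxX hx0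
    have hU₁rk : ρ U₁ = finrank F U₁ := by
      refine ih U₁ (by omega) ?_
      intro W hWU₁ hWdim
      have hxW : x ∉ W := fun h => hxU₁ (hWU₁ h)
      set U₂ := W ⊔ span F {x} with hU₂def
      have hU₂X : U₂ ≤ X := sup_le (hWU₁.trans hU₁X) (by rwa [span_le, Set.singleton_subset_iff])
      have hU₂dim : finrank F U₂ = finrank F W + 1 := finrank_sup_span hxW
      have hinf : U₁ ⊓ U₂ = W := by
        refine le_antisymm ?_ (le_inf hWU₁ le_sup_left)
        intro y hy
        obtain ⟨hy1, hy2⟩ := Submodule.mem_inf.mp hy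
        obtain ⟨w, hw, z, hz, rfl⟩ := Submodule.mem_sup.mp hy2
        obtain ⟨c, rfl⟩ := mem_span_singleton.mp hz
        rcases eq_or_ne c 0 with rfl | hc
        · simpa using hw
        · exfalso
          apply hxU₁
          have : c • x ∈ U₁ := by
            have := U₁.sub_mem hy1 (hWU₁ hw)
            simpa using this
          simpa [smul_smul, inv_mul_cancel₀ hc] using U₁.smul_mem c⁻¹ this
      have hsup : U₁ ⊔ U₂ = X := by
        refine Submodule.eq_of_le_of_finrank_le (sup_le hU₁X hU₂X) ?_
        have hlt : U₁ < U₁ ⊔ U₂ := by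
          refine lt_of_le_of_ne le_sup_left ?_
          intro h
          have hxU₂ : x ∈ U₂ := (le_sup_right : span F {x} ≤ U₂) (mem_span_singleton_self x)
          have hx' : x ∈ U₁ ⊔ U₂ := (le_sup_right : U₂ ≤ U₁ ⊔ U₂) hxU₂
          exact hxU₁ (by rw [h]; exact hx')
        have := Submodule.finrank_lt_finrank_of_lt hlt
        omega
      have hsubm := hρ.2.2 U₁ U₂
      rw [hinf, hsup] at hsubm
      have hH1 := H U₁ hU₁X hU₁dim
      have hH2 := H U₂ hU₂X (by omega)
      omega
    have hH1 := H U₁ hU₁X hU₁dim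
    have := hρ.1 X
    omega

lemma exists_hyperplane_rank_eq (hρ : IsQMatroid ρ) {X : Submodule F E}
    (h : ρ X < finrank F X) :
    ∃ U, U ≤ X ∧ finrank F U + 1 = finrank F X ∧ ρ U = ρ X := by
  by_contra hc
  push_neg at hc
  have : ρ X = finrank F X := by
    refine indep_of_hyperplanes hρ (finrank F X) X le_rfl ?_
    intro U hUX hUdim
    have h1 := hρ.2.1 U X hUX
    have h2 := hc U hUX hUdim
    omega
  omega

end Aux2

/-- If a linear map between `q`-matroids is not weak, there is a circuit whose
image has strictly larger rank, the same dimension, and is independent. -/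
theorem stmt16 {F : Type*} [Field F] [Fintype F]
    {E₁ E₂ : Type*} [AddCommGroup E₁] [Module F E₁] [FiniteDimensional F E₁]
    [AddCommGroup E₂] [Module F E₂] [FiniteDimensional F E₂]
    (ρ₁ : Submodule F E₁ → ℕ) (ρ₂ : Submodule F E₂ → ℕ)
    (h₁ : IsQMatroid ρ₁) (h₂ : IsQMatroid ρ₂)
    (φ : E₁ →ₗ[F] E₂) (hnw : ¬ ∀ V : Submodule F E₁, ρ₂ (V.map φ) ≤ ρ₁ V) :
    ∃ C : Submodule F E₁, IsCircuit ρ₁ C ∧ ρ₁ C < ρ₂ (C.map φ) ∧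
      finrank F (C.map φ) = finrank F C ∧ ρ₂ (C.map φ) = finrank F (C.map φ) := by
  classical
  push_neg at hnw
  obtain ⟨V₀, hV₀⟩ := hnw
  have hex : ∃ n, ∃ V : Submodule F E₁, finrank F V ≤ n ∧ ρ₁ V < ρ₂ (V.map φ) :=
    ⟨finrank F V₀, V₀, le_rfl, hV₀⟩
  obtain ⟨C, hCn, hCviol⟩ := Nat.find_spec hex
  -- minimality
  have hmin : ∀ W : Submodule F E₁, W < C → ρ₂ (W.map φ) ≤ ρ₁ W := by
    intro W hW
    by_contra h
    push_neg at h
    have hdim : finrank F W < finrank F C := Submodule.finrank_lt_finrank_of_lt hW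
    exact Nat.find_min hex (lt_of_lt_of_le hdim hCn) ⟨W, le_rfl, h⟩
  -- independence of the image
  have hindep : ρ₂ (C.map φ) = finrank F (C.map φ) := by
    by_contra h
    have hlt : ρ₂ (C.map φ) < finrank F (C.map φ) := lt_of_le_of_ne (h₂.1 _) h
    obtain ⟨U, hUle, hUdim, hUrk⟩ := exists_hyperplane_rank_eq h₂ hlt
    set W := C ⊓ Submodule.comap φ U with hWdef
    have hmapW : W.map φ = U := by
      refine le_antisymm ?_ ?_
      · refine le_trans (Submodule.map_mono inf_le_right) ?_
        exact Submodule.map_comap_le φ U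
      · intro y hy
        obtain ⟨x, hxC, rfl⟩ := Submodule.mem_map.mp (hUle hy)
        exact Submodule.mem_map.mpr ⟨x, ⟨hxC, Submodule.mem_comap.mpr hy⟩, rfl⟩
    have hWC : W < C := by
      refine lt_of_le_of_ne inf_le_left ?_
      intro hWC'
      rw [hWC'] at hmapW
      rw [← hmapW] at hUdim
      omega
    have h1 := hmin W hWC
    have h2' := h₁.2.1 W C hWC.le
    rw [hmapW, hUrk] at h1
    omega
  -- kernel is disjoint from C
  have hker : ∀ W : Submodule F E₁, W ≤ C → finrank F (W.map φ) = finrank F W := by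
    have hkerC : ∀ x ∈ C, φ x = 0 → x = 0 := by
      intro x hxC hφx
      by_contra hx0
      obtain ⟨A, hAC, hxA, hAdim, hAsup⟩ := exists_hyperplane_avoiding hxC hx0
      have hmapA : A.map φ = C.map φ := by
        conv_rhs => rw [← hAsup]
        rw [Submodule.map_sup, Submodule.map_span]
        simp [hφx]
      have hAC' : A < C := lt_of_le_of_ne hAC (fun h => hxA (h ▸ hxC))
      have h1 := hmin A hAC'
      have h2' := h₁.2.1 A C hAC
      rw [hmapA] at h1
      omega
    intro W hWC
    have hinj : Function.Injective (φ ∘ₗ W.subtype) := by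
      rw [← LinearMap.ker_eq_bot, LinearMap.ker_comp, eq_bot_iff]
      rintro ⟨a, haW⟩ ha
      have : φ a = 0 := ha
      have := hkerC a (hWC haW) this
      exact (Submodule.mem_bot F).mpr (Subtype.ext this)
    have hrange : LinearMap.range (φ ∘ₗ W.subtype) = W.map φ := by
      rw [LinearMap.range_comp, Submodule.range_subtype]
    rw [← hrange]
    exact LinearMap.finrank_range_of_inj hinj
  have hdimC : finrank F (C.map φ) = finrank F C := hker C le_rfl
  refine ⟨C, ⟨?_, ?_⟩, hCviol, hdimC, hindep⟩
  · -- C is dependent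
    omega
  · -- proper subspaces are independent
    intro W hW
    have h1 := hmin W hW
    have h2' : ρ₂ (W.map φ) = finrank F (W.map φ) := by
      have hle : W.map φ ≤ C.map φ := Submodule.map_mono hW.le
      have h3 := rank_add_finrank_le h₂ hle
      have h4 := h₂.1 (W.map φ)
      omega
    have h5 := hker W hW.le
    have h6 := h₁.1 W
    omega
end

section
/- Let M₁, M₂ be q-matroids with ground spaces E₁, E₂, and M = M₁ ⊕ M₂ their direct sum with natural embeddings ι₁, ι₂. Then (M, ι₁, ι₂) is a coproduct in the category of q-matroids with linear weak maps as morphisms: for any q-matroid N and linear weak maps αᵢ : Mᵢ → N, the unique linear map ε : E₁ ⊕ E₂ → N with ε ∘ ιᵢ = αᵢ is a weak map. -/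
open Submodule Module

/-- A complement of `X` inside `W`. -/
lemma exists_compl_in {F E : Type*} [Field F] [AddCommGroup E] [Module F E]
    [FiniteDimensional F E] {X W : Submodule F E} (hXW : X ≤ W) :
    ∃ C : Submodule F E, X ⊔ C = W ∧ finrank F C + finrank F X = finrank F W := by
  classical
  obtain ⟨C', hC'⟩ := Submodule.exists_isCompl (X.comap W.subtype)
  refine ⟨C'.map W.subtype, ?_, ?_⟩
  · have : (X.comap W.subtype ⊔ C').map W.subtype = (⊤ : Submodule F W).map W.subtype := by
      rw [hC'.sup_eq_top]
    rw [Submodule.map_sup, Submodule.map_comap_subtype, inf_eq_right.mpr hXW,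
      Submodule.map_subtype_top] at this
    exact this
  · have h1 := (Submodule.finrank_add_eq_of_isCompl hC'.symm)
    have h2 : finrank F (C'.map W.subtype) = finrank F C' :=
      Submodule.finrank_map_subtype_eq W C'
    have h3 : finrank F (X.comap W.subtype) = finrank F X := by
      have : (X.comap W.subtype).map W.subtype = X := by
        rw [Submodule.map_comap_subtype, inf_eq_right.mpr hXW]
      conv_rhs => rw [← this]
      exact (Submodule.finrank_map_subtype_eq W _).symm
    rw [h2, ← h3]
    exact h1

lemma qm_sup_le {F E : Type*} [Field F] [AddCommGroup E] [Module F E]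
    {ρ : Submodule F E → ℕ} (h : IsQMatroid ρ) (A B : Submodule F E) :
    ρ (A ⊔ B) ≤ ρ A + ρ B :=
  le_trans (Nat.le_add_right _ _) (h.2.2 A B)

/-- The direct sum is a coproduct in the category of `q`-matroids with linear
weak maps: for linear weak maps `αᵢ : Mᵢ → N`, the unique linear map
`ε : E₁ ⊕ E₂ → E₃` with `ε ∘ ιᵢ = αᵢ` is a weak map from `M₁ ⊕ M₂` to `N`. -/
theorem stmt17 {F : Type*} [Field F] [Fintype F]
    {E₁ E₂ E₃ : Type*} [AddCommGroup E₁] [Module F E₁] [FiniteDimensional F E₁]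
    [AddCommGroup E₂] [Module F E₂] [FiniteDimensional F E₂]
    [AddCommGroup E₃] [Module F E₃] [FiniteDimensional F E₃]
    (ρ₁ : Submodule F E₁ → ℕ) (ρ₂ : Submodule F E₂ → ℕ) (ρ₃ : Submodule F E₃ → ℕ)
    (h₁ : IsQMatroid ρ₁) (h₂ : IsQMatroid ρ₂) (h₃ : IsQMatroid ρ₃)
    (α₁ : E₁ →ₗ[F] E₃) (α₂ : E₂ →ₗ[F] E₃)
    (hw₁ : ∀ V : Submodule F E₁, ρ₃ (V.map α₁) ≤ ρ₁ V)
    (hw₂ : ∀ V : Submodule F E₂, ρ₃ (V.map α₂) ≤ ρ₂ V) :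
    (∀ x : E₁, (α₁.coprod α₂) (x, 0) = α₁ x) ∧
    (∀ y : E₂, (α₁.coprod α₂) (0, y) = α₂ y) ∧
    (∀ ε : E₁ × E₂ →ₗ[F] E₃, (∀ x : E₁, ε (x, 0) = α₁ x) → (∀ y : E₂, ε (0, y) = α₂ y) →
      ε = α₁.coprod α₂) ∧
    (∀ V : Submodule F (E₁ × E₂), ρ₃ (V.map (α₁.coprod α₂)) ≤ dsRho ρ₁ ρ₂ V) := by
  classical
  set ε := α₁.coprod α₂ with hε
  refine ⟨fun x => by simp [hε], fun y => by simp [hε], ?_, ?_⟩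
  · intro e he1 he2
    refine LinearMap.ext fun p => ?_
    obtain ⟨x, y⟩ := p
    have : (x, y) = ((x, 0) : E₁ × E₂) + (0, y) := by simp
    rw [this, map_add, map_add, he1, he2]
    simp [hε]
  · intro V
    refine le_csInf ⟨ρ₁ (V.map (LinearMap.fst F E₁ E₂)) + ρ₂ (V.map (LinearMap.snd F E₁ E₂)) +
      (finrank F V - finrank F V), V, le_rfl, rfl⟩ ?_
    rintro n ⟨X, hXV, rfl⟩
    obtain ⟨C, hsup, hdim⟩ := exists_compl_in hXV
    have hVmap : V.map ε = X.map ε ⊔ C.map ε := by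
      rw [← Submodule.map_sup, hsup]
    have step1 : ρ₃ (V.map ε) ≤ ρ₃ (X.map ε) + finrank F C := by
      rw [hVmap]
      refine le_trans (qm_sup_le h₃ _ _) (Nat.add_le_add_left ?_ _)
      exact le_trans (h₃.1 _) (Submodule.finrank_map_le ε C)
    have step2 : ρ₃ (X.map ε) ≤ ρ₁ (X.map (LinearMap.fst F E₁ E₂)) +
        ρ₂ (X.map (LinearMap.snd F E₁ E₂)) := by
      have hle : X.map ε ≤ (X.map (LinearMap.fst F E₁ E₂)).map α₁ ⊔
          (X.map (LinearMap.snd F E₁ E₂)).map α₂ := by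
        rintro _ ⟨⟨x, y⟩, hxy, rfl⟩
        have hx : α₁ x ∈ (X.map (LinearMap.fst F E₁ E₂)).map α₁ :=
          ⟨x, ⟨(x, y), hxy, rfl⟩, rfl⟩
        have hy : α₂ y ∈ (X.map (LinearMap.snd F E₁ E₂)).map α₂ :=
          ⟨y, ⟨(x, y), hxy, rfl⟩, rfl⟩
        exact Submodule.add_mem_sup hx hy
      calc ρ₃ (X.map ε) ≤ ρ₃ ((X.map (LinearMap.fst F E₁ E₂)).map α₁ ⊔
            (X.map (LinearMap.snd F E₁ E₂)).map α₂) := h₃.2.1 _ _ hle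
        _ ≤ ρ₃ ((X.map (LinearMap.fst F E₁ E₂)).map α₁) +
            ρ₃ ((X.map (LinearMap.snd F E₁ E₂)).map α₂) := qm_sup_le h₃ _ _
        _ ≤ _ := Nat.add_le_add (hw₁ _) (hw₂ _)
    have hC : finrank F C = finrank F V - finrank F X := by omega
    calc ρ₃ (V.map ε) ≤ ρ₃ (X.map ε) + finrank F C := step1
      _ ≤ _ := by rw [hC]; exact Nat.add_le_add_right step2 _
end

section
/- Let M₁ = M₂ = U₁(𝔽_q²) be the uniform q-matroid of rank 1 on 𝔽_q² (rank function ρ(V) = min{1, dim V}), and let N = U₃(𝔽_q³). Define α₁, α₂ : 𝔽_q² → 𝔽_q³ by αᵢ(0) = 0 and αᵢ(v) = λ_v eᵢ for v ≠ 0, where λ_v is the leftmost nonzero entry of v. Then α₁ and α₂ are rank-preserving strong L-maps, but there is no L-map ε : 𝔽_q⁴ → 𝔽_q³ satisfying ε ∘ ι₁ = α₁ and ε ∘ ι₂ = α₂ for the natural embeddings ι₁(v) = (v, 0), ι₂(v) = (0, v) of 𝔽_q² into 𝔽_q⁴. -/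
open Submodule Module

/-- Rank function of the uniform `q`-matroid `U₁(𝔽²)`. -/
noncomputable def rhoU1 {F : Type*} [Field F] (V : Submodule F (Fin 2 → F)) : ℕ :=
  min 1 (finrank F V)

/-- Rank function of the uniform `q`-matroid `U₃(𝔽³)`. -/
noncomputable def rhoU3 {F : Type*} [Field F] (V : Submodule F (Fin 3 → F)) : ℕ :=
  min 3 (finrank F V)

/-- The leftmost nonzero entry of a nonzero vector in `𝔽²`. -/
def leftmost {F : Type*} [Field F] [DecidableEq F] (v : Fin 2 → F) : F :=
  if v 0 ≠ 0 then v 0 else v 1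

/-- The map `αᵢ : 𝔽² → 𝔽³`, sending `0 ↦ 0` and `v ↦ λ_v eᵢ` for `v ≠ 0`. -/
def alphaMap {F : Type*} [Field F] [DecidableEq F] (i : Fin 3) (v : Fin 2 → F) :
    Fin 3 → F :=
  if v = 0 then 0 else leftmost v • (Pi.single i 1 : Fin 3 → F)

/-- The natural embedding `ι₁ : 𝔽² → 𝔽⁴`. -/
def emb₁ {F : Type*} [Field F] (v : Fin 2 → F) : Fin 4 → F := ![v 0, v 1, 0, 0]

/-- The natural embedding `ι₂ : 𝔽² → 𝔽⁴`. -/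
def emb₂ {F : Type*} [Field F] (v : Fin 2 → F) : Fin 4 → F := ![0, 0, v 0, v 1]


section Helpers
variable {F : Type*} [Field F] [DecidableEq F]

lemma leftmost_ne_zero {v : Fin 2 → F} (hv : v ≠ 0) : leftmost v ≠ 0 := by
  unfold leftmost
  split
  · assumption
  · next h =>
    push_neg at h
    intro h1
    apply hv
    funext j
    fin_cases j <;> simpa [h]

lemma leftmost_smul (c : F) (v : Fin 2 → F) : leftmost (c • v) = c * leftmost v := by
  rcases eq_or_ne c 0 with rfl | hc
  · simp [leftmost]
  · unfold leftmost
    by_cases h : v 0 = 0 <;> simp [h, hc, mul_ne_zero hc]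

lemma alphaMap_eq (i : Fin 3) (v : Fin 2 → F) :
    alphaMap i v = leftmost v • (Pi.single i 1 : Fin 3 → F) := by
  unfold alphaMap
  split
  · next h => subst h; simp [leftmost]
  · rfl

lemma single_ne_zero' (i : Fin 3) : (Pi.single i 1 : Fin 3 → F) ≠ 0 := by
  intro h
  have := congrFun h i
  simp at this

lemma alphaMap_image (i : Fin 3) {V : Submodule F (Fin 2 → F)} (hV : V ≠ ⊥) :
    alphaMap i '' (V : Set (Fin 2 → F)) =
      (span F {(Pi.single i 1 : Fin 3 → F)} : Set (Fin 3 → F)) := by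
  obtain ⟨v₀, hv₀V, hv₀⟩ := Submodule.exists_mem_ne_zero_of_ne_bot hV
  have hl : leftmost v₀ ≠ 0 := leftmost_ne_zero hv₀
  ext y
  constructor
  · rintro ⟨v, hv, rfl⟩
    rw [alphaMap_eq]
    exact Submodule.smul_mem _ _ (Submodule.mem_span_singleton_self _)
  · intro hy
    rw [SetLike.mem_coe, Submodule.mem_span_singleton] at hy
    obtain ⟨c, rfl⟩ := hy
    refine ⟨(c * (leftmost v₀)⁻¹) • v₀, Submodule.smul_mem _ _ hv₀V, ?_⟩
    rw [alphaMap_eq, leftmost_smul, mul_assoc, inv_mul_cancel₀ hl, mul_one]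

end Helpers

section Part2
variable {F : Type*} [Field F] [Fintype F] [DecidableEq F]

lemma ncard_submodule {n : ℕ} (P : Submodule F (Fin n → F)) :
    (P : Set (Fin n → F)).ncard = Fintype.card F ^ finrank F P := by
  rw [← Nat.card_coe_set_eq]
  letI : Fintype P := Fintype.ofFinite P
  rw [Nat.card_eq_fintype_card]
  exact card_eq_pow_finrank

lemma plane_bijOn {ε : (Fin 4 → F) → (Fin 3 → F)} (hε : IsLMap F ε)
    (q₁ q₂ : Fin 4 → F) {u v : Fin 3 → F} (h1 : ε q₁ = u) (h2 : ε q₂ = v)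
    (h : LinearIndependent F ![u, v]) :
    Set.BijOn ε (span F {q₁, q₂} : Set (Fin 4 → F)) (span F {u, v} : Set (Fin 3 → F)) := by
  subst h1 h2
  set Q := span F {q₁, q₂} with hQdef
  set T := span F {ε q₁, ε q₂} with hTdef
  obtain ⟨W, hW⟩ := hε Q
  have hq1Q : q₁ ∈ Q := subset_span (Set.mem_insert _ _)
  have hq2Q : q₂ ∈ Q := subset_span (Set.mem_insert_of_mem _ rfl)
  have hm1 : ε q₁ ∈ W := by
    have : ε q₁ ∈ ε '' (Q : Set (Fin 4 → F)) := ⟨q₁, hq1Q, rfl⟩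
    rwa [hW] at this
  have hm2 : ε q₂ ∈ W := by
    have : ε q₂ ∈ ε '' (Q : Set (Fin 4 → F)) := ⟨q₂, hq2Q, rfl⟩
    rwa [hW] at this
  have hle : T ≤ W := by
    rw [hTdef, span_le]
    exact Set.insert_subset hm1 (Set.singleton_subset_iff.mpr hm2)
  have hcard : 1 < Fintype.card F := Fintype.one_lt_card
  have hT2 : finrank F T = 2 := by
    have hr := finrank_span_eq_card (R := F) h
    have : Set.range ![ε q₁, ε q₂] = {ε q₁, ε q₂} := by
      simp [Matrix.range_cons, Matrix.range_empty, Set.pair_comm]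
    rw [this] at hr
    simpa using hr
  have hQ2 : finrank F Q ≤ 2 := by
    have := finrank_span_le_card (R := F) ({q₁, q₂} : Set (Fin 4 → F))
    refine this.trans ?_
    rw [Set.toFinset_insert, Set.toFinset_singleton]
    exact (Finset.card_insert_le _ _).trans (by simp)
  -- cardinalities
  have hWQ : (W : Set (Fin 3 → F)).ncard ≤ (Q : Set (Fin 4 → F)).ncard := by
    rw [← hW]
    exact Set.ncard_image_le (Set.toFinite _)
  have hQT : (Q : Set (Fin 4 → F)).ncard ≤ (T : Set (Fin 3 → F)).ncard := by
    rw [ncard_submodule, ncard_submodule, hT2]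
    exact Nat.pow_le_pow_right (le_of_lt hcard) hQ2
  have hWfin : finrank F W ≤ 2 := by
    have : Fintype.card F ^ finrank F W ≤ Fintype.card F ^ (2 : ℕ) := by
      rw [← ncard_submodule, ← hT2, ← ncard_submodule]
      exact hWQ.trans hQT
    exact (Nat.pow_le_pow_iff_right hcard).mp this
  have hTW : T = W := Submodule.eq_of_le_of_finrank_le hle (hWfin.trans_eq hT2.symm)
  have himg : ε '' (Q : Set (Fin 4 → F)) = (T : Set (Fin 3 → F)) := by rw [hW, hTW]
  have hinj : Set.InjOn ε (Q : Set (Fin 4 → F)) := by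
    refine Set.injOn_of_ncard_image_eq ?_ (Set.toFinite _)
    rw [himg]
    exact le_antisymm (hTW ▸ hWQ) hQT
  exact ⟨fun x hx => himg ▸ Set.mem_image_of_mem ε hx, hinj, fun y hy => by
    rw [← himg] at hy; exact hy⟩

end Part2
/-- The maps `α₁, α₂ : U₁(𝔽²) → U₃(𝔽³)` are rank-preserving strong `L`-maps, but
there is no `L`-map `ε : 𝔽⁴ → 𝔽³` with `ε ∘ ι₁ = α₁` and `ε ∘ ι₂ = α₂`. -/
theorem stmt19 {F : Type*} [Field F] [Fintype F] [DecidableEq F] :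
    (∀ i : Fin 3, i = 0 ∨ i = 1 →
      IsLMap F (alphaMap (F := F) i) ∧
      (∀ (V : Submodule F (Fin 2 → F)) (W : Submodule F (Fin 3 → F)),
        alphaMap i '' (V : Set (Fin 2 → F)) = (W : Set (Fin 3 → F)) → rhoU3 W = rhoU1 V) ∧
      (∀ Fl : Submodule F (Fin 3 → F), IsFlat rhoU3 Fl →
        ∃ Fl' : Submodule F (Fin 2 → F),
          alphaMap i ⁻¹' (Fl : Set (Fin 3 → F)) = (Fl' : Set (Fin 2 → F)) ∧
          IsFlat rhoU1 Fl')) ∧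
    ¬ ∃ ε : (Fin 4 → F) → (Fin 3 → F), IsLMap F ε ∧
      (∀ v : Fin 2 → F, ε (emb₁ v) = alphaMap 0 v) ∧
      (∀ v : Fin 2 → F, ε (emb₂ v) = alphaMap 1 v) := by
  constructor
  · intro i _
    refine ⟨?_, ?_, ?_⟩
    · intro V
      by_cases hV : V = ⊥
      · exact ⟨⊥, by simp [hV, alphaMap]⟩
      · exact ⟨_, alphaMap_image i hV⟩
    · intro V W h
      by_cases hV : V = ⊥
      · subst hV
        have hW : W = ⊥ := by
          apply SetLike.coe_injective
          rw [← h]; simp [alphaMap]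
        subst hW; simp [rhoU3, rhoU1, finrank_bot]
      · have hW : W = span F {(Pi.single i 1 : Fin 3 → F)} := by
          apply SetLike.coe_injective
          rw [← h, alphaMap_image i hV]
        subst hW
        have h1 : finrank F (span F {(Pi.single i 1 : Fin 3 → F)}) = 1 :=
          finrank_span_singleton (single_ne_zero' i)
        have h2 : finrank F V ≠ 0 := by simpa [Submodule.finrank_eq_zero] using hV
        simp only [rhoU3, rhoU1, h1]
        omega
    · intro Fl _
      by_cases hi : (Pi.single i 1 : Fin 3 → F) ∈ Fl
      · refine ⟨⊤, ?_, ?_⟩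
        · ext v
          simp only [Set.mem_preimage, SetLike.mem_coe, Submodule.top_coe, Set.mem_univ,
            iff_true]
          rw [alphaMap_eq]; exact Fl.smul_mem _ hi
        · intro W hW; exact absurd hW not_top_lt
      · refine ⟨⊥, ?_, ?_⟩
        · ext v
          simp only [Set.mem_preimage, SetLike.mem_coe, Submodule.bot_coe,
            Set.mem_singleton_iff]
          constructor
          · intro hv
            by_contra h0
            apply hi
            rw [alphaMap_eq] at hv
            have := Fl.smul_mem (leftmost v)⁻¹ hv
            rwa [inv_smul_smul₀ (leftmost_ne_zero h0)] at this
          · rintro rfl; rw [alphaMap_eq]; simp [leftmost]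
        · intro W hW
          have hW' : W ≠ ⊥ := ne_of_gt hW
          have : finrank F W ≠ 0 := by simpa [Submodule.finrank_eq_zero] using hW'
          simp only [rhoU1, finrank_bot]
          omega
  · rintro ⟨ε, hε, h1, h2⟩
    set e₀ : Fin 3 → F := Pi.single 0 1 with he₀
    set e₁ : Fin 3 → F := Pi.single 1 1 with he₁
    -- bridging lemmas
    have hemb₁ : ∀ a b : F, emb₁ ![a, b] = ![a, b, 0, 0] := by
      intro a b; funext j; fin_cases j <;> simp [emb₁]
    have hemb₂ : ∀ a b : F, emb₂ ![a, b] = ![0, 0, a, b] := by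
      intro a b; funext j; fin_cases j <;> simp [emb₂]
    have hε₁ : ∀ a b : F, ε ![a, b, 0, 0] = leftmost ![a, b] • e₀ := by
      intro a b; rw [← hemb₁, h1, alphaMap_eq]
    have hε₂ : ∀ a b : F, ε ![0, 0, a, b] = leftmost ![a, b] • e₁ := by
      intro a b; rw [← hemb₂, h2, alphaMap_eq]
    set d₁ : Fin 4 → F := ![0, 1, 0, 0] with hd₁
    set d₂ : Fin 4 → F := ![0, 0, 1, 0] with hd₂
    set p₁ : Fin 4 → F := ![1, 0, 0, 0] with hp₁
    set x₀ : Fin 4 → F := ![0, 1, 1, 0] with hx₀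
    have hεd₁ : ε d₁ = e₀ := by rw [hd₁, hε₁]; simp [leftmost]
    have hεd₂ : ε d₂ = e₁ := by rw [hd₂, hε₂]; simp [leftmost]
    have hεp₁ : ε p₁ = e₀ := by rw [hp₁, hε₁]; simp [leftmost]
    have hε0 : ε 0 = 0 := by
      have h00 : (0 : Fin 4 → F) = ![0, 0, 0, 0] := by
        funext j; fin_cases j <;> simp
      rw [h00, hε₁]; simp [leftmost]
    have hone : (1 : F) ≠ 0 := one_ne_zero
    have hindep01 : LinearIndependent F ![e₀, e₁] := by
      rw [LinearIndependent.pair_iff]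
      intro s t hst
      constructor
      · have := congrFun hst 0; simpa [he₀, he₁, Pi.single_apply] using this
      · have := congrFun hst 1; simpa [he₀, he₁, Pi.single_apply] using this
    have hD := plane_bijOn hε d₁ d₂ hεd₁ hεd₂ hindep01
    have hx₀sum : x₀ = d₁ + d₂ := by funext j; fin_cases j <;> simp [hx₀, hd₁, hd₂]
    have hx₀D : x₀ ∈ span F {d₁, d₂} := by
      rw [hx₀sum]
      exact add_mem (subset_span (Set.mem_insert _ _))
        (subset_span (Set.mem_insert_of_mem _ rfl))
    have hgT : ε x₀ ∈ span F {e₀, e₁} := hD.mapsTo hx₀D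
    obtain ⟨l, m, hg⟩ := Submodule.mem_span_pair.mp hgT
    have hm : m ≠ 0 := by
      intro hm0
      subst hm0
      rcases eq_or_ne l 0 with rfl | hl
      · have hg0 : ε x₀ = 0 := by rw [← hg]; simp
        have : x₀ = 0 := hD.injOn hx₀D (zero_mem (span F {d₁, d₂})) (by rw [hg0, hε0])
        have := congrFun this 2
        simp [hx₀] at this
      · have hεx' : ε ![0, l, 0, 0] = ε x₀ := by
          rw [hε₁, ← hg]; simp [leftmost]
        have hx'mem : (![0, l, 0, 0] : Fin 4 → F) ∈ span F {d₁, d₂} := by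
          have : (![0, l, 0, 0] : Fin 4 → F) = l • d₁ := by
            funext j; fin_cases j <;> simp [hd₁]
          rw [this]
          exact smul_mem _ _ (subset_span (Set.mem_insert _ _))
        have : (![0, l, 0, 0] : Fin 4 → F) = x₀ := hD.injOn hx'mem hx₀D hεx'
        have := congrFun this 2
        simp [hx₀] at this
    -- the plane G
    have hg1 : ε x₀ 1 = m := by
      rw [← hg]; simp [he₀, he₁, Pi.single_apply]
    have hg0 : ε x₀ 0 = l := by
      rw [← hg]; simp [he₀, he₁, Pi.single_apply]
    have hindepG : LinearIndependent F ![e₀, ε x₀] := by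
      rw [LinearIndependent.pair_iff]
      intro s t hst
      have ht : t = 0 := by
        have := congrFun hst 1
        simp [he₀, Pi.single_apply, hg1] at this
        rcases this with h | h
        · exact h
        · exact absurd h hm
      subst ht
      refine ⟨?_, rfl⟩
      have := congrFun hst 0
      simpa [he₀, Pi.single_apply] using this
    have hG := plane_bijOn hε p₁ x₀ hεp₁ rfl hindepG
    have he₁mem : e₁ ∈ span F {e₀, ε x₀} := by
      have h5 : m • e₁ ∈ span F {e₀, ε x₀} := by
        have h6 : m • e₁ = ε x₀ - l • e₀ := by rw [← hg]; abel
        rw [h6]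
        exact sub_mem (subset_span (Set.mem_insert_of_mem _ rfl))
          (smul_mem _ _ (subset_span (Set.mem_insert _ _)))
      have h7 : e₁ = m⁻¹ • (m • e₁) := (inv_smul_smul₀ hm _).symm
      rw [h7]
      exact smul_mem _ _ h5
    obtain ⟨x, hxG, hεx⟩ := hG.surjOn he₁mem
    obtain ⟨a, b, hab⟩ := Submodule.mem_span_pair.mp hxG
    rcases eq_or_ne b 0 with rfl | hb
    · have hx' : x = ![a, 0, 0, 0] := by
        rw [← hab]; funext j; fin_cases j <;> simp [hp₁, hx₀]
      have hc := congrFun hεx 1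
      rw [hx', hε₁ a 0] at hc
      simp [he₀, he₁, Pi.single_apply] at hc
    · have habne : (![a, b] : Fin 2 → F) ≠ 0 := by
        intro h0
        have := congrFun h0 1
        simp at this
        exact hb this
      have hcne : leftmost ![a, b] ≠ 0 := leftmost_ne_zero habne
      have hεp : ε ![a, b, 0, 0] = leftmost ![a, b] • e₀ := hε₁ a b
      have hεr : ε ![0, 0, b, 0] = b • e₁ := by
        rw [hε₂ b 0]; simp [leftmost, hb]
      have hindepQ : LinearIndependent F ![leftmost ![a, b] • e₀, b • e₁] := by
        rw [LinearIndependent.pair_iff]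
        intro s t hst
        constructor
        · have := congrFun hst 0
          simp [he₀, he₁, Pi.single_apply] at this
          rcases this with h | h
          · exact h
          · exact absurd h hcne
        · have := congrFun hst 1
          simp [he₀, he₁, Pi.single_apply] at this
          rcases this with h | h
          · exact h
          · exact absurd h hb
      have hQ := plane_bijOn hε ![a, b, 0, 0] ![0, 0, b, 0] hεp hεr hindepQ
      have hxpr : x = ![a, b, 0, 0] + ![0, 0, b, 0] := by
        rw [← hab]; funext j; fin_cases j <;> simp [hp₁, hx₀]
      have hxQ : x ∈ span F {![a, b, 0, 0], ![0, 0, b, 0]} := by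
        rw [hxpr]
        exact add_mem (subset_span (Set.mem_insert _ _))
          (subset_span (Set.mem_insert_of_mem _ rfl))
      have hd₂Q : d₂ ∈ span F {![a, b, 0, 0], ![0, 0, b, 0]} := by
        have : d₂ = b⁻¹ • ![0, 0, b, 0] := by
          funext j; fin_cases j <;> simp [hd₂, inv_mul_cancel₀ hb]
        rw [this]
        exact smul_mem _ _ (subset_span (Set.mem_insert_of_mem _ rfl))
      have hxd : x = d₂ := hQ.injOn hxQ hd₂Q (by rw [hεx, hεd₂])
      have h1' := congrFun hxd 1
      have h2' := congrFun hxpr 1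
      simp [hd₂] at h1'
      simp at h2'
      rw [h1'] at h2'
      exact hb h2'.symm
end
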